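/- Counterexample ingredient to the Strong Maximum Principle: let p > 2, β > max{2, p/(p−2)}, 0 < γ ≤ β, k > 0. Define f(x,t) = k·x^β(1−x^γ) − (p−1)β^{p−1}(β−1)·t^{p−1}·x^{(β−1)(p−2)+β−2}·|1 − ((β+γ)/β)x^γ|^{p−2}·(1 − ((β+γ)(β+γ−1))/(β(β−1))·x^γ). Then there exists t₀ > 0 such that f(x,t) > 0 for all x ∈ (0,1) and all t ∈ (0,t₀). -/

import Mathlib

/-!
Put `y = x ^ γ`, `c₁ = (β + γ) / β` and `c₂ = (β + γ)(β + γ - 1) / (β (β - 1))`, so that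
`1 ≤ c₁` and `1 < c₂`. Where `c₂ y ≥ 1` the subtracted term is `≤ 0`. Where `c₂ y < 1` we have
`1 - y > 1 - c₂⁻¹ > 0` and `|1 - c₁ y| ≤ c₁`; since `β > p / (p - 2)` makes the exponent of `x`
in the subtracted term at least `β`, that term is at most `const · t ^ (p - 1) · x ^ β`, which is
dominated by `k x ^ β (1 - y)` once `t ^ (p - 1)` is small enough.
-/

open Real

theorem abs_one_sub_mul_le {c y : ℝ} (hc : 1 ≤ c) (hy0 : 0 ≤ y) (hy1 : y ≤ 1) :
    |1 - c * y| ≤ c :=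
  abs_le.mpr ⟨by nlinarith, by nlinarith⟩

theorem sub_pos_of_coeff_lt {x y k C s c₁ c₂ q m β : ℝ} (hx0 : 0 < x) (hx1 : x < 1)
    (hy0 : 0 ≤ y) (hy1 : y < 1) (hk : 0 < k) (hc₁ : 1 ≤ c₁) (hc₂ : 0 < c₂)
    (hq : 0 ≤ q) (hm : β ≤ m) (hC : 0 ≤ C) (hs : 0 ≤ s)
    (hsmall : C * s * c₁ ^ q < k * (1 - c₂⁻¹)) :
    0 < k * x ^ β * (1 - y) - C * s * x ^ m * |1 - c₁ * y| ^ q * (1 - c₂ * y) := by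
  have hxβ : 0 < x ^ β := rpow_pos_of_pos hx0 β
  have hmain : 0 < k * x ^ β * (1 - y) := by
    have : 0 < 1 - y := by linarith
    positivity
  rcases le_or_gt 1 (c₂ * y) with hy | hy
  · have : C * s * x ^ m * |1 - c₁ * y| ^ q * (1 - c₂ * y) ≤ 0 :=
      mul_nonpos_of_nonneg_of_nonpos (by positivity) (by linarith)
    linarith
  · have hxm : x ^ m ≤ x ^ β := rpow_le_rpow_of_exponent_ge hx0 hx1.le hm
    have habs : |1 - c₁ * y| ^ q ≤ c₁ ^ q :=
      rpow_le_rpow (abs_nonneg _) (abs_one_sub_mul_le hc₁ hy0 hy1.le) hq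
    have hy' : y < c₂⁻¹ := by rw [inv_eq_one_div, lt_div_iff₀ hc₂]; linarith
    have hc₂y : 0 ≤ c₂ * y := by positivity
    suffices C * s * x ^ m * |1 - c₁ * y| ^ q * (1 - c₂ * y) < k * x ^ β * (1 - y) by linarith
    calc C * s * x ^ m * |1 - c₁ * y| ^ q * (1 - c₂ * y)
        ≤ C * s * x ^ β * c₁ ^ q * 1 := by gcongr; linarith
      _ = C * s * c₁ ^ q * x ^ β := by ring
      _ < k * (1 - c₂⁻¹) * x ^ β := by gcongr
      _ ≤ k * (1 - y) * x ^ β := by gcongr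
      _ = k * x ^ β * (1 - y) := by ring

theorem stmt8_general (p β γ k : ℝ) (hp : 2 < p) (hβ : max 2 (p / (p - 2)) < β)
    (hγ1 : 0 < γ) (hk : 0 < k)
    (f : ℝ → ℝ → ℝ)
    (hf : ∀ x t : ℝ, f x t =
      k * x ^ β * (1 - x ^ γ) -
        (p - 1) * β ^ (p - 1) * (β - 1) * t ^ (p - 1) *
          x ^ ((β - 1) * (p - 2) + β - 2) *
          |1 - ((β + γ) / β) * x ^ γ| ^ (p - 2) *
          (1 - ((β + γ) * (β + γ - 1)) / (β * (β - 1)) * x ^ γ)) :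
    ∃ t₀ : ℝ, 0 < t₀ ∧ ∀ x ∈ Set.Ioo (0 : ℝ) 1, ∀ t ∈ Set.Ioo (0 : ℝ) t₀,
      0 < f x t := by
  have hβ2 : 2 < β := (le_max_left _ _).trans_lt hβ
  have hm : β ≤ (β - 1) * (p - 2) + β - 2 := by
    have := (div_lt_iff₀ (by linarith : 0 < p - 2)).mp ((le_max_right _ _).trans_lt hβ)
    nlinarith
  set C := (p - 1) * β ^ (p - 1) * (β - 1)
  set c₁ := (β + γ) / β
  set c₂ := ((β + γ) * (β + γ - 1)) / (β * (β - 1))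
  have hC : 0 < C :=
    mul_pos (mul_pos (by linarith) (rpow_pos_of_pos (by linarith) _)) (by linarith)
  have hc₁ : 1 ≤ c₁ := by rw [le_div_iff₀ (by linarith)]; linarith
  have hc₂ : 1 < c₂ := by rw [lt_div_iff₀ (by nlinarith)]; nlinarith
  have hD : 0 < C * c₁ ^ (p - 2) := mul_pos hC (rpow_pos_of_pos (by linarith) _)
  set ε := k * (1 - c₂⁻¹) / (C * c₁ ^ (p - 2))
  have hε : 0 < ε := div_pos (mul_pos hk (sub_pos.mpr (inv_lt_one_of_one_lt₀ hc₂))) hD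
  refine ⟨ε ^ (p - 1)⁻¹, rpow_pos_of_pos hε _, ?_⟩
  rintro x ⟨hx0, hx1⟩ t ⟨ht0, ht⟩
  have hts : t ^ (p - 1) < ε := (lt_rpow_inv_iff_of_pos ht0.le hε.le (by linarith)).mp ht
  have hsmall := (lt_div_iff₀ hD).mp hts
  rw [hf]
  exact sub_pos_of_coeff_lt hx0 hx1 (rpow_nonneg hx0.le γ) (rpow_lt_one hx0.le hx1 hγ1) hk hc₁
    (by linarith) (by linarith) hm hC.le (rpow_nonneg ht0.le _) (by linarith)

theorem stmt8 (p β γ k : ℝ) (hp : 2 < p) (hβ : max 2 (p / (p - 2)) < β)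
    (hγ1 : 0 < γ) (hγ2 : γ ≤ β) (hk : 0 < k)
    (f : ℝ → ℝ → ℝ)
    (hf : ∀ x t : ℝ, f x t =
      k * x ^ β * (1 - x ^ γ) -
        (p - 1) * β ^ (p - 1) * (β - 1) * t ^ (p - 1) *
          x ^ ((β - 1) * (p - 2) + β - 2) *
          |1 - ((β + γ) / β) * x ^ γ| ^ (p - 2) *
          (1 - ((β + γ) * (β + γ - 1)) / (β * (β - 1)) * x ^ γ)) :
    ∃ t₀ : ℝ, 0 < t₀ ∧ ∀ x ∈ Set.Ioo (0 : ℝ) 1, ∀ t ∈ Set.Ioo (0 : ℝ) t₀,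
      0 < f x t :=
  stmt8_general p β γ k hp hβ hγ1 hk f hf
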